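/- Given a POVM A on a finite-dimensional Hilbert space H and a postprocessing B of A via a stochastic matrix ν (B_j = Σ_k ν_{kj} A_k), define C^j_k := B_j^{-1/2} ν_{kj} A_k B_j^{-1/2} + C'^j_k, where B_j^{-1/2} is the Moore–Penrose pseudoinverse of B_j^{1/2}, Π_j the projection onto supp(B_j), and (C'^j_k)_k is any family of positive semidefinite operators with Σ_k C'^j_k = I − Π_j. Then for every j, (C^j_k)_k is a POVM, and for every state ρ and every outcome k, Σ_j Tr[√(B_j) ρ √(B_j) C^j_k] = Tr[ρ A_k]. -/

import Mathlib

/-! With `S = √B_j` and `P` its pseudoinverse, `P * S = S * P` is the orthogonal projection onto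
`supp B_j`. Since `ν_{kj} A_k ≤ B_j`, each `ν_{kj} A_k` is supported in `supp B_j` and so is fixed by
this projection on both sides, while `C'^j_k ≤ 1 - P * S` is annihilated by it. Hence
`∑_k C^j_k = P B_j P + (1 - P S) = 1` and `√B_j C^j_k √B_j = ν_{kj} A_k`; cycling the trace and
summing over `j` with `∑_j ν_{kj} = 1` gives `Tr[ρ A_k]`. -/

open scoped ComplexOrder Matrix

noncomputable def Matrix.PosSemidef.sqrt {𝕜 : Type*} [RCLike 𝕜] {n : Type*} [Fintype n]
    [DecidableEq n] {A : Matrix n n 𝕜} (hA : A.PosSemidef) : Matrix n n 𝕜 :=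
  hA.1.eigenvectorUnitary.1 * Matrix.diagonal (fun i => ((Real.sqrt (hA.1.eigenvalues i) : ℝ) : 𝕜)) *
  (star hA.1.eigenvectorUnitary : Matrix n n 𝕜)

namespace Matrix

variable {𝕜 : Type*} [RCLike 𝕜] {n : Type*} [Fintype n]

namespace PosSemidef

variable [DecidableEq n] {A : Matrix n n 𝕜} (hA : A.PosSemidef)

lemma posSemidef_sqrt : hA.sqrt.PosSemidef :=
  (PosSemidef.diagonal fun _ => RCLike.ofReal_nonneg.mpr (Real.sqrt_nonneg _))
    |>.mul_mul_conjTranspose_same _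

lemma sqrt_mul_self : hA.sqrt * hA.sqrt = A := by
  have hU : (star hA.1.eigenvectorUnitary : Matrix n n 𝕜) * hA.1.eigenvectorUnitary = 1 :=
    Unitary.coe_star_mul_self _
  conv_rhs => rw [hA.1.spectral_theorem, Unitary.conjStarAlgAut_apply]
  simp only [sqrt, Matrix.mul_assoc]
  rw [← Matrix.mul_assoc _ (hA.1.eigenvectorUnitary : Matrix n n 𝕜), hU, Matrix.one_mul,
    ← Matrix.mul_assoc (diagonal _), diagonal_mul_diagonal]
  congr 3
  funext i
  simp [← RCLike.ofReal_mul, Real.mul_self_sqrt (hA.eigenvalues_nonneg i)]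

end PosSemidef

lemma PosSemidef.mulVec_eq_zero_of_posSemidef_sub {M T : Matrix n n 𝕜} (hM : M.PosSemidef)
    (hTM : (T - M).PosSemidef) {x : n → 𝕜} (hx : T *ᵥ x = 0) : M *ᵥ x = 0 := by
  rw [← hM.dotProduct_mulVec_zero_iff]
  refine le_antisymm ?_ (hM.dotProduct_mulVec_nonneg x)
  simpa [sub_mulVec, hx] using hTM.dotProduct_mulVec_nonneg x

lemma PosSemidef.mul_eq_zero_of_posSemidef_sub {M T X : Matrix n n 𝕜} (hM : M.PosSemidef)
    (hTM : (T - M).PosSemidef) (hX : T * X = 0) : M * X = 0 := by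
  refine ext_iff_mulVec.mpr fun v => ?_
  simpa [mulVec_mulVec] using
    hM.mulVec_eq_zero_of_posSemidef_sub hTM (x := X *ᵥ v) (by simp [mulVec_mulVec, hX])

lemma mul_eq_zero_of_sum_mul_eq_zero {ι : Type*} [Fintype ι] {M : ι → Matrix n n 𝕜}
    (hM : ∀ i, (M i).PosSemidef) {X : Matrix n n 𝕜} (hX : (∑ i, M i) * X = 0) (k : ι) :
    M k * X = 0 := by
  classical
  refine (hM k).mul_eq_zero_of_posSemidef_sub ?_ hX
  rw [← Finset.add_sum_erase _ _ (Finset.mem_univ k), add_sub_cancel_left]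
  exact posSemidef_sum _ fun i _ => hM i

lemma mul_eq_self_of_mul_eq_self {M Q : Matrix n n 𝕜} (hM : M.IsHermitian) (hQ : Q.IsHermitian)
    (h : M * Q = M) : Q * M = M := by
  simpa only [conjTranspose_mul, hM.eq, hQ.eq] using congrArg conjTranspose h

section Penrose

variable {S P : Matrix n n 𝕜}

lemma mul_comm_of_penrose (hS : S.IsHermitian) (h1 : S * P * S = S) (h3 : (S * P)ᴴ = S * P)
    (h4 : (P * S)ᴴ = P * S) : P * S = S * P := by
  have hSSP : S * (S * P) = S := by
    simpa only [conjTranspose_mul, h3, hS.eq] using congrArg conjTranspose h1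
  have hPSS : P * S * S = S := by
    have := congrArg conjTranspose (show S * (P * S) = S by rw [← Matrix.mul_assoc, h1])
    rwa [conjTranspose_mul, h4, hS.eq] at this
  calc P * S = P * S * (S * P) := by rw [Matrix.mul_assoc, hSSP]
    _ = S * P := by rw [← Matrix.mul_assoc, hPSS]

lemma isHermitian_mul_mul_of_penrose (hS : S.IsHermitian) (h1 : S * P * S = S)
    (h3 : (S * P)ᴴ = S * P) (h4 : (P * S)ᴴ = P * S) : (P * S * P).IsHermitian := by
  have hcomm := mul_comm_of_penrose hS h1 h3 h4
  calc (P * S * P)ᴴ = Pᴴ * Sᴴ * P := by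
        rw [conjTranspose_mul, h4, hcomm, ← Matrix.mul_assoc, hS.eq]
    _ = P * S * P := by rw [← conjTranspose_mul, h3, hcomm]


lemma posSemidef_mul_mul_of_penrose {M : Matrix n n 𝕜} (hS : S.IsHermitian)
    (h1 : S * P * S = S) (h3 : (S * P)ᴴ = S * P) (h4 : (P * S)ᴴ = P * S) (hM : M.PosSemidef)
    (hMQ : M * (P * S) = M) : (P * M * P).PosSemidef := by
  have hcomm := mul_comm_of_penrose hS h1 h3 h4
  have hQM : S * P * M = M := hcomm ▸ mul_eq_self_of_mul_eq_self hM.isHermitian h4 hMQ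
  -- `P` need not be Hermitian, but `P * S * P` is, and it acts on `M` as `P` does.
  have : P * M * P = P * S * P * M * (P * S * P)ᴴ := by
    rw [(isHermitian_mul_mul_of_penrose hS h1 h3 h4).eq]
    nth_rewrite 1 [← hQM, ← hMQ]
    simp only [Matrix.mul_assoc]
  rw [this]
  exact hM.mul_mul_conjTranspose_same _

lemma mul_mul_mul_eq_self_of_penrose {M : Matrix n n 𝕜} (hM : M.IsHermitian) (hS : S.IsHermitian)
    (h1 : S * P * S = S) (h3 : (S * P)ᴴ = S * P) (h4 : (P * S)ᴴ = P * S)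
    (hMQ : M * (P * S) = M) : S * (P * M * P) * S = M := by
  have hQM := mul_eq_self_of_mul_eq_self hM h4 hMQ
  calc S * (P * M * P) * S = S * P * M * (P * S) := by simp only [Matrix.mul_assoc]
    _ = M := by rw [← mul_comm_of_penrose hS h1 h3 h4, hQM, hMQ]

end Penrose

def IsPOVM [DecidableEq n] {ι : Type*} [Fintype ι] (E : ι → Matrix n n 𝕜) : Prop :=
  (∀ k, (E k).PosSemidef) ∧ ∑ k, E k = 1

theorem isPOVM_and_sandwich_of_penrose [DecidableEq n] {ι : Type*} [Fintype ι]
    {S P : Matrix n n 𝕜} (hS : S.IsHermitian) (h1 : S * P * S = S) (h3 : (S * P)ᴴ = S * P)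
    (h4 : (P * S)ᴴ = P * S) {M C' C : ι → Matrix n n 𝕜} (hM : ∀ k, (M k).PosSemidef)
    (hMsum : ∑ k, M k = S * S) (hC' : ∀ k, (C' k).PosSemidef) (hC'sum : ∑ k, C' k = 1 - P * S)
    (hC : ∀ k, C k = P * M k * P + C' k) :
    IsPOVM C ∧ ∀ k, S * C k * S = M k := by
  have hSQ : S * (P * S) = S := by rw [← Matrix.mul_assoc, h1]
  have hQQ : P * S * (P * S) = P * S := by rw [Matrix.mul_assoc, hSQ]
  have hMQ k : M k * (P * S) = M k := by
    have := mul_eq_zero_of_sum_mul_eq_zero hM (X := 1 - P * S)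
      (by rw [hMsum, Matrix.mul_sub, Matrix.mul_one, Matrix.mul_assoc, hSQ, sub_self]) k
    rwa [Matrix.mul_sub, Matrix.mul_one, sub_eq_zero, eq_comm] at this
  have hSC' k : S * C' k = 0 := by
    have hC'Q := mul_eq_zero_of_sum_mul_eq_zero hC'
      (by rw [hC'sum, Matrix.sub_mul, Matrix.one_mul, hQQ, sub_self]) k
    have hQC' : P * S * C' k = 0 := by
      simpa only [conjTranspose_mul, (hC' k).isHermitian.eq, h4, conjTranspose_zero]
        using congrArg conjTranspose hC'Q
    rw [← hSQ, Matrix.mul_assoc, hQC', Matrix.mul_zero]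
  refine ⟨⟨fun k => ?_, ?_⟩, fun k => ?_⟩
  · rw [hC]
    exact (posSemidef_mul_mul_of_penrose hS h1 h3 h4 (hM k) (hMQ k)).add (hC' k)
  · simp only [hC, Finset.sum_add_distrib, ← Finset.sum_mul, ← Finset.mul_sum, hMsum, hC'sum]
    rw [← Matrix.mul_assoc, Matrix.mul_assoc, ← mul_comm_of_penrose hS h1 h3 h4, hQQ,
      add_sub_cancel]
  · rw [hC, Matrix.mul_add, Matrix.add_mul, hSC', Matrix.zero_mul, add_zero,
      mul_mul_mul_eq_self_of_penrose (hM k).isHermitian hS h1 h3 h4 (hMQ k)]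

end Matrix

theorem stmt_11_general {n ΩA ΩB : Type*} [Fintype n] [DecidableEq n] [Fintype ΩA] [Fintype ΩB]
    (A : ΩA → Matrix n n ℂ) (hApos : ∀ k, (A k).PosSemidef)
    (ν : ΩA → ΩB → ℝ) (hν : ∀ k j, 0 ≤ ν k j) (hνrow : ∀ k, ∑ j, ν k j = 1)
    (B : ΩB → Matrix n n ℂ) (hB : ∀ j, B j = ∑ k, (ν k j : ℂ) • A k)
    (hBpos : ∀ j, (B j).PosSemidef)
    (Pinv : ΩB → Matrix n n ℂ)
    (hP1 : ∀ j, (hBpos j).sqrt * Pinv j * (hBpos j).sqrt = (hBpos j).sqrt)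
    (hP3 : ∀ j, ((hBpos j).sqrt * Pinv j)ᴴ = (hBpos j).sqrt * Pinv j)
    (hP4 : ∀ j, (Pinv j * (hBpos j).sqrt)ᴴ = Pinv j * (hBpos j).sqrt)
    (C' : ΩB → ΩA → Matrix n n ℂ) (hC'pos : ∀ j k, (C' j k).PosSemidef)
    (hC'sum : ∀ j, ∑ k, C' j k = 1 - Pinv j * (hBpos j).sqrt)
    (C : ΩB → ΩA → Matrix n n ℂ)
    (hC : ∀ j k, C j k = Pinv j * ((ν k j : ℂ) • A k) * Pinv j + C' j k) :
    (∀ j, (∀ k, (C j k).PosSemidef) ∧ ∑ k, C j k = 1) ∧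
    (∀ ρ : Matrix n n ℂ, ρ.PosSemidef → ρ.trace = 1 → ∀ k,
      ∑ j, ((hBpos j).sqrt * ρ * (hBpos j).sqrt * C j k).trace = (ρ * A k).trace) := by
  have key j := Matrix.isPOVM_and_sandwich_of_penrose (hBpos j).posSemidef_sqrt.isHermitian
    (hP1 j) (hP3 j) (hP4 j) (fun k => (hApos k).smul (Complex.zero_le_real.mpr (hν k j)))
    (by rw [(hBpos j).sqrt_mul_self, hB]) (hC'pos j) (hC'sum j) (hC j)
  refine ⟨fun j => (key j).1, fun ρ _ _ k => ?_⟩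
  have htrace j : ((hBpos j).sqrt * ρ * (hBpos j).sqrt * C j k).trace
      = (ρ * ((hBpos j).sqrt * C j k * (hBpos j).sqrt)).trace := by
    rw [Matrix.mul_assoc, Matrix.mul_assoc, Matrix.trace_mul_comm]
    simp only [Matrix.mul_assoc]
  simp only [htrace, (key _).2, Matrix.mul_smul, Matrix.trace_smul, smul_eq_mul, ← Finset.sum_mul,
    ← Complex.ofReal_sum, hνrow, Complex.ofReal_one, one_mul]

/-- Let `A` be a POVM, `B j = ∑ k, ν k j • A k` a postprocessing via a
stochastic matrix `ν`, `Pinv j` the Moore–Penrose pseudoinverse of `√(B j)`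
(characterized by the four Penrose conditions), `Π j = Pinv j * √(B j)` the projection
onto `supp (B j)`, and `(C' j k)_k` any family of positive semidefinite operators with
`∑ k, C' j k = 1 - Π j`.  Define `C j k := Pinv j * (ν k j • A k) * Pinv j + C' j k`.
Then each `(C j ·)` is a POVM, and for every state `ρ` and outcome `k`,
`∑ j, Tr[√(B j) ρ √(B j) * C j k] = Tr[ρ * A k]`. -/
theorem stmt_11 {n ΩA ΩB : Type*} [Fintype n] [DecidableEq n] [Fintype ΩA] [Fintype ΩB]
    (A : ΩA → Matrix n n ℂ) (hApos : ∀ k, (A k).PosSemidef) (hAsum : ∑ k, A k = 1)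
    (ν : ΩA → ΩB → ℝ) (hν : ∀ k j, 0 ≤ ν k j) (hνrow : ∀ k, ∑ j, ν k j = 1)
    (B : ΩB → Matrix n n ℂ) (hB : ∀ j, B j = ∑ k, (ν k j : ℂ) • A k)
    (hBpos : ∀ j, (B j).PosSemidef)
    (Pinv : ΩB → Matrix n n ℂ)
    (hP1 : ∀ j, (hBpos j).sqrt * Pinv j * (hBpos j).sqrt = (hBpos j).sqrt)
    (hP2 : ∀ j, Pinv j * (hBpos j).sqrt * Pinv j = Pinv j)
    (hP3 : ∀ j, ((hBpos j).sqrt * Pinv j)ᴴ = (hBpos j).sqrt * Pinv j)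
    (hP4 : ∀ j, (Pinv j * (hBpos j).sqrt)ᴴ = Pinv j * (hBpos j).sqrt)
    (C' : ΩB → ΩA → Matrix n n ℂ) (hC'pos : ∀ j k, (C' j k).PosSemidef)
    (hC'sum : ∀ j, ∑ k, C' j k = 1 - Pinv j * (hBpos j).sqrt)
    (C : ΩB → ΩA → Matrix n n ℂ)
    (hC : ∀ j k, C j k = Pinv j * ((ν k j : ℂ) • A k) * Pinv j + C' j k) :
    (∀ j, (∀ k, (C j k).PosSemidef) ∧ ∑ k, C j k = 1) ∧
    (∀ ρ : Matrix n n ℂ, ρ.PosSemidef → ρ.trace = 1 → ∀ k,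
      ∑ j, ((hBpos j).sqrt * ρ * (hBpos j).sqrt * C j k).trace = (ρ * A k).trace) :=
  stmt_11_general A hApos ν hν hνrow B hB hBpos Pinv hP1 hP3 hP4 C' hC'pos hC'sum C hC
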